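/- Fix M > 0 and a bounded measurable function V : ℝ → ℝ with V(x) = 0 for x ∉ [0, M], and let θ ∈ ℝ. If for every δ > 0 one has ∫₀^∞ ψ_θ(x)² (1 + x²)^{−(1+δ)/2} dx < ∞, then ψ_θ'(M) = 0. -/

import Mathlib

/-! Beyond `M` the potential vanishes, so `ψ_θ'' = 0` there and `ψ_θ(x) = ψ_θ'(M) x + b` for
`x ≥ M`. If `ψ_θ'(M) ≠ 0`, then `ψ_θ(x)² (1 + x²)⁻¹ → ψ_θ'(M)² > 0`, so already the weighted
integral with `δ = 1` diverges. -/

open MeasureTheory Set Filter Topology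

theorem intervalIntegral_sub_mul_eq_of_forall_gt_eq_zero {g : ℝ → ℝ} {M x : ℝ}
    (hg : IntervalIntegrable g volume 0 M) (hzero : ∀ t, M < t → g t = 0) (hMx : M ≤ x) :
    ∫ t in (0:ℝ)..x, (x - t) * g t =
      (x * ∫ t in (0:ℝ)..M, g t) - ∫ t in (0:ℝ)..M, t * g t := by
  have hvanish : EqOn (fun t => (x - t) * g t) 0 (uIoc M x) := fun t ht => by
    rw [uIoc_of_le hMx] at ht
    simp [hzero t ht.1]
  have hint : IntervalIntegrable (fun t => (x - t) * g t) volume 0 M :=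
    hg.continuousOn_mul (by fun_prop)
  rw [← intervalIntegral.integral_add_adjacent_intervals hint
      ((intervalIntegrable_const (c := (0:ℝ))).congr hvanish.symm),
    intervalIntegral.integral_congr_ae (Eventually.of_forall fun t ht => hvanish ht)]
  simp only [sub_mul, Pi.zero_apply, intervalIntegral.integral_zero, add_zero]
  rw [intervalIntegral.integral_sub (hg.const_mul x) (hg.continuousOn_mul (continuousOn_id' _)),
    intervalIntegral.integral_const_mul]

theorem tendsto_affine_sq_mul_inv_one_add_sq (a b : ℝ) :
    Tendsto (fun x : ℝ => (a * x + b) ^ 2 * (1 + x ^ 2)⁻¹) atTop (𝓝 (a ^ 2)) := by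
  have hlim : Tendsto (fun y : ℝ => (a + b * y) ^ 2 / (y ^ 2 + 1)) (𝓝 0) (𝓝 (a ^ 2)) := by
    have hcont : ContinuousAt (fun y : ℝ => (a + b * y) ^ 2 / (y ^ 2 + 1)) 0 :=
      (by fun_prop : Continuous fun y : ℝ => (a + b * y) ^ 2).continuousAt.div
        (by fun_prop) (by norm_num)
    simpa using hcont.tendsto
  refine (hlim.comp tendsto_inv_atTop_zero).congr' ?_
  filter_upwards [eventually_gt_atTop 0] with x hx
  simp only [Function.comp_apply]
  field_simp

theorem setLIntegral_Ioi_ofReal_eq_top_of_tendsto {f : ℝ → ℝ} {L : ℝ} (hL : 0 < L)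
    (hf : Tendsto f atTop (𝓝 L)) (a : ℝ) : ∫⁻ x in Ioi a, ENNReal.ofReal (f x) = ⊤ := by
  obtain ⟨R, hR⟩ := eventually_atTop.1 (hf.eventually_const_lt (half_lt_self hL))
  have hc : ENNReal.ofReal (L / 2) ≠ 0 := by simpa using hL
  refine top_unique ?_
  calc ⊤ = ENNReal.ofReal (L / 2) * volume (Ioi (max a R)) := by
        rw [Real.volume_Ioi, ENNReal.mul_top hc]
    _ = ∫⁻ _ in Ioi (max a R), ENNReal.ofReal (L / 2) := (setLIntegral_const _ _).symm
    _ ≤ ∫⁻ x in Ioi (max a R), ENNReal.ofReal (f x) :=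
        setLIntegral_mono' measurableSet_Ioi fun x hx =>
          ENNReal.ofReal_le_ofReal (hR x ((le_max_right a R).trans hx.le)).le
    _ ≤ ∫⁻ x in Ioi a, ENNReal.ofReal (f x) :=
        lintegral_mono_set (Ioi_subset_Ioi (le_max_left a R))

theorem Measurable.intervalIntegrable_of_abs_le {f : ℝ → ℝ} (hf : Measurable f) {C : ℝ}
    (hC : ∀ x, |f x| ≤ C) (a b : ℝ) : IntervalIntegrable f volume a b :=
  (intervalIntegrable_iff' (μ := volume)).2 <|
    Measure.integrableOn_of_bounded measure_Icc_lt_top.ne hf.aestronglyMeasurable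
      (ae_of_all _ hC)

/-- If `ψ_θ` belongs to the weighted space `L²((0,∞), (1+x²)^{−(1+δ)/2} dx)` for
every `δ > 0`, then `ψ_θ'(M) = 1 + θ ∫₀ᴹ V ψ_θ = 0`. -/
theorem weighted_L2_implies_resonance
    (M : ℝ) (hM : 0 < M) (V : ℝ → ℝ) (hVmeas : Measurable V)
    (hVbd : ∃ C : ℝ, ∀ x : ℝ, |V x| ≤ C)
    (hVsupp : ∀ x : ℝ, x ∉ Set.Icc 0 M → V x = 0)
    (θ : ℝ) (ψ : ℝ → ℝ) (hψc : ContinuousOn ψ (Set.Ici 0))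
    (hψ : ∀ x ≥ (0:ℝ), ψ x = x + θ * ∫ t in (0:ℝ)..x, (x - t) * V t * ψ t)
    (hL2 : ∀ δ : ℝ, 0 < δ →
      (∫⁻ x in Set.Ioi (0:ℝ),
        ENNReal.ofReal (ψ x ^ 2 * (1 + x ^ 2) ^ (-((1 + δ) / 2)))) < ⊤) :
    1 + θ * ∫ t in (0:ℝ)..M, V t * ψ t = 0 := by
  by_contra ha
  obtain ⟨C, hC⟩ := hVbd
  set a := 1 + θ * ∫ t in (0:ℝ)..M, V t * ψ t
  set b := -θ * ∫ t in (0:ℝ)..M, t * (V t * ψ t)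
  have hVψ : IntervalIntegrable (fun t => V t * ψ t) volume 0 M :=
    (hVmeas.intervalIntegrable_of_abs_le hC 0 M).mul_continuousOn
      (hψc.mono (uIcc_of_le hM.le ▸ Icc_subset_Ici_self))
  have haffine : ∀ x ≥ M, ψ x = a * x + b := by
    intro x hx
    rw [hψ x (hM.le.trans hx)]
    simp_rw [mul_assoc]
    rw [intervalIntegral_sub_mul_eq_of_forall_gt_eq_zero hVψ
      (fun t ht => by simp [hVsupp t fun h => ht.not_ge h.2]) hx]
    ring
  have hlim : Tendsto (fun x => ψ x ^ 2 * (1 + x ^ 2) ^ (-((1 + 1) / 2) : ℝ)) atTop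
      (𝓝 (a ^ 2)) := by
    refine (tendsto_affine_sq_mul_inv_one_add_sq a b).congr' ?_
    filter_upwards [eventually_ge_atTop M] with x hx
    norm_num [haffine x hx, Real.rpow_neg_one]
  exact (hL2 1 one_pos).ne
    (setLIntegral_Ioi_ofReal_eq_top_of_tendsto (sq_pos_of_ne_zero ha) hlim 0)
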